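/- Let f, g : ℝⁿ → ℝ be locally Lipschitz at x. Then the Clarke subdifferential of the product satisfies ∂_c(f·g)(x) ⊆ g(x)·∂_c f(x) + f(x)·∂_c g(x) + (a correction term that vanishes when f(x), g(x) ≥ 0); in particular, if f(x) ≥ 0 and g(x) ≥ 0 then ∂_c(fg)(x) ⊆ g(x)∂_c f(x) + f(x)∂_c g(x). -/

import Mathlib

open Filter Set Pointwise

noncomputable def clarkeDeriv {E : Type*} [NormedAddCommGroup E] [NormedSpace ℝ E]
    (f : E → ℝ) (x v : E) : ℝ :=
  Filter.limsup (fun p : E × ℝ => (f (p.1 + p.2 • v) - f p.1) / p.2)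
    ((nhds x) ×ˢ (nhdsWithin 0 (Set.Ioi 0)))

noncomputable def clarkeSubdiff {E : Type*} [NormedAddCommGroup E] [InnerProductSpace ℝ E]
    (f : E → ℝ) (x : E) : Set E :=
  {ξ | ∀ v, (inner ℝ ξ v : ℝ) ≤ clarkeDeriv f x v}

def whitneyCone {E : Type*} [NormedAddCommGroup E] [NormedSpace ℝ E]
    (A B : Set E) (p : E) : Set E :=
  {w | ∃ (x y : ℕ → E) (c : ℕ → ℝ), (∀ n, x n ∈ A) ∧ (∀ n, y n ∈ B) ∧ (∀ n, 0 < c n) ∧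
    Filter.Tendsto x Filter.atTop (nhds p) ∧ Filter.Tendsto y Filter.atTop (nhds p) ∧
    Filter.Tendsto (fun n => c n • (x n - y n)) Filter.atTop (nhds w)}

def epi {E : Type*} (f : E → ℝ) : Set (E × ℝ) := {p | f p.1 ≤ p.2}

/-!
For a function that is Lipschitz near `x`, the difference quotients are bounded, so the Clarke
derivative `f°(x; ·)` is a finite sublinear function; by Hahn–Banach it is the support function
of `∂_c f(x)`, which is therefore compact and convex. Writing the difference quotient of `f g` as
`f (y + t v) · q_g + g y · q_f` and using `f x, g x ≥ 0` to pull these factors out of the limsup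
gives `(f g)°(x; v) ≤ g x · f°(x; v) + f x · g°(x; v)`. The right-hand side is the support
function of the compact convex set `g x • ∂_c f(x) + f x • ∂_c g(x)`, so separation yields the
inclusion.
-/

open Topology

section LimsupReal

variable {ι : Type*} {l : Filter ι} [l.NeBot] {u v : ι → ℝ}

lemma isBoundedUnder_abs_mul_of_tendsto {a : ℝ} (hu : Tendsto u l (𝓝 a))
    (hv : IsBoundedUnder (· ≤ ·) l fun i => |v i|) :
    IsBoundedUnder (· ≤ ·) l fun i => |u i * v i| := by
  simp only [abs_mul]
  exact isBoundedUnder_le_mul_of_nonneg (.of_forall fun _ => abs_nonneg _)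
    hu.abs.isBoundedUnder_le (.of_forall fun _ => abs_nonneg _) hv

lemma limsup_add_le_of_isBoundedUnder_abs (hu : IsBoundedUnder (· ≤ ·) l fun i => |u i|)
    (hv : IsBoundedUnder (· ≤ ·) l fun i => |v i|) :
    limsup (fun i => u i + v i) l ≤ limsup u l + limsup v l := by
  obtain ⟨hu_le, hu_ge⟩ := isBoundedUnder_le_abs.mp hu
  obtain ⟨hv_le, hv_ge⟩ := isBoundedUnder_le_abs.mp hv
  exact limsup_add_le hu_ge hu_le hv_ge.isCoboundedUnder_le hv_le

lemma limsup_const_mul_of_nonneg {a : ℝ} (ha : 0 ≤ a)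
    (hu : IsBoundedUnder (· ≤ ·) l fun i => |u i|) :
    limsup (fun i => a * u i) l = a * limsup u l := by
  obtain ⟨hu_le, hu_ge⟩ := isBoundedUnder_le_abs.mp hu
  exact ((monotone_mul_left_of_nonneg ha).map_limsup_of_continuousAt u
    (continuous_const_mul a).continuousAt hu_le hu_ge.isCoboundedUnder_le).symm

lemma limsup_mul_le_of_tendsto {a : ℝ} (ha : 0 ≤ a) (hu : Tendsto u l (𝓝 a))
    (hv : IsBoundedUnder (· ≤ ·) l fun i => |v i|) :
    limsup (fun i => u i * v i) l ≤ a * limsup v l := by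
  have hdev : Tendsto (fun i => u i - a) l (𝓝 0) := tendsto_sub_nhds_zero_iff.mpr hu
  have herr : Tendsto (fun i => (u i - a) * v i) l (𝓝 0) :=
    hdev.zero_mul_isBoundedUnder_le (by simpa [Function.comp_def] using hv)
  calc limsup (fun i => u i * v i) l
      = limsup (fun i => a * v i + (u i - a) * v i) l := by congr with i; ring
    _ ≤ limsup (fun i => a * v i) l + limsup (fun i => (u i - a) * v i) l :=
      limsup_add_le_of_isBoundedUnder_abs
        (isBoundedUnder_abs_mul_of_tendsto tendsto_const_nhds hv)
        (isBoundedUnder_abs_mul_of_tendsto hdev hv)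
    _ = a * limsup v l := by rw [limsup_const_mul_of_nonneg ha hv, herr.limsup_eq, add_zero]

end LimsupReal

abbrev clarkeFilter {E : Type*} [TopologicalSpace E] (x : E) : Filter (E × ℝ) :=
  𝓝 x ×ˢ 𝓝[>] (0 : ℝ)

lemma tendsto_rescale_clarkeFilter {E : Type*} [TopologicalSpace E] (x : E) {c : ℝ}
    (hc : 0 < c) :
    Tendsto (fun p : E × ℝ => (p.1, c * p.2)) (clarkeFilter x) (clarkeFilter x) :=
  tendsto_fst.prodMk
    ((tendsto_comap.mono_left (comap_mulLeft_nhdsGT_zero hc).ge).comp tendsto_snd)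

section ClarkeDeriv

variable {E : Type*} [NormedAddCommGroup E] [NormedSpace ℝ E]

noncomputable def clarkeQuotient (f : E → ℝ) (v : E) (p : E × ℝ) : ℝ :=
  (f (p.1 + p.2 • v) - f p.1) / p.2

lemma clarkeDeriv_eq_limsup (f : E → ℝ) (x v : E) :
    clarkeDeriv f x v = limsup (clarkeQuotient f v) (clarkeFilter x) := rfl

lemma tendsto_add_smul_clarkeFilter (x v : E) :
    Tendsto (fun p : E × ℝ => p.1 + p.2 • v) (clarkeFilter x) (𝓝 x) := by
  have hfst : Tendsto Prod.fst (clarkeFilter x) (𝓝 x) := tendsto_fst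
  have hsnd : Tendsto Prod.snd (clarkeFilter x) (𝓝 0) := tendsto_snd.mono_right nhdsWithin_le_nhds
  simpa using hfst.add (hsnd.smul_const v)

lemma tendsto_translate_clarkeFilter (x w : E) :
    Tendsto (fun p : E × ℝ => (p.1 + p.2 • w, p.2)) (clarkeFilter x) (clarkeFilter x) :=
  (tendsto_add_smul_clarkeFilter x w).prodMk tendsto_snd

lemma clarkeQuotient_add (f : E → ℝ) (v w : E) (p : E × ℝ) :
    clarkeQuotient f (v + w) p
      = clarkeQuotient f v (p.1 + p.2 • w, p.2) + clarkeQuotient f w p := by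
  simp only [clarkeQuotient, smul_add]
  rw [← add_div, add_right_comm p.1, ← add_assoc, sub_add_sub_cancel]

lemma clarkeQuotient_smul (f : E → ℝ) (v : E) (c : ℝ) (p : E × ℝ) :
    clarkeQuotient f (c • v) p = c * clarkeQuotient f v (p.1, c * p.2) := by
  rcases eq_or_ne c 0 with rfl | hc
  · simp [clarkeQuotient]
  · simp only [clarkeQuotient, smul_smul, mul_comm p.2 c]
    field_simp

lemma clarkeQuotient_mul (f g : E → ℝ) (v : E) (p : E × ℝ) :
    clarkeQuotient (fun y => f y * g y) v p
      = f (p.1 + p.2 • v) * clarkeQuotient g v p + g p.1 * clarkeQuotient f v p := by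
  simp only [clarkeQuotient]
  ring

variable {f g : E → ℝ} {x : E}

lemma exists_eventually_abs_clarkeQuotient_le
    (hf : ∃ s ∈ 𝓝 x, ∃ K : NNReal, LipschitzOnWith K f s) :
    ∃ K : NNReal, ∀ v, ∀ᶠ p in clarkeFilter x, |clarkeQuotient f v p| ≤ K * ‖v‖ := by
  obtain ⟨s, hs, K, hK⟩ := hf
  refine ⟨K, fun v => ?_⟩
  filter_upwards [tendsto_fst hs, tendsto_add_smul_clarkeFilter x v hs,
    tendsto_snd self_mem_nhdsWithin] with p hp hpv (ht : 0 < p.2)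
  have hlip := hK.dist_le_mul _ hpv _ hp
  rw [Real.dist_eq, dist_eq_norm, add_sub_cancel_left, norm_smul, Real.norm_of_nonneg ht.le]
    at hlip
  rw [clarkeQuotient, abs_div, abs_of_pos ht, div_le_iff₀ ht]
  linarith

lemma isBoundedUnder_abs_clarkeQuotient
    (hf : ∃ s ∈ 𝓝 x, ∃ K : NNReal, LipschitzOnWith K f s) (v : E) :
    IsBoundedUnder (· ≤ ·) (clarkeFilter x) fun p => |clarkeQuotient f v p| :=
  have ⟨_, hK⟩ := exists_eventually_abs_clarkeQuotient_le hf
  isBoundedUnder_of_eventually_le (hK v)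

lemma exists_clarkeDeriv_le_mul_norm
    (hf : ∃ s ∈ 𝓝 x, ∃ K : NNReal, LipschitzOnWith K f s) :
    ∃ K : NNReal, ∀ v, clarkeDeriv f x v ≤ K * ‖v‖ := by
  obtain ⟨K, hK⟩ := exists_eventually_abs_clarkeQuotient_le hf
  refine ⟨K, fun v => limsup_le_of_le ?_ ((hK v).mono fun p hp => (abs_le.mp hp).2)⟩
  exact (isBoundedUnder_le_abs.mp (isBoundedUnder_abs_clarkeQuotient hf v)).2.isCoboundedUnder_le

lemma clarkeDeriv_zero (f : E → ℝ) (x : E) : clarkeDeriv f x 0 = 0 := by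
  have hq : clarkeQuotient f (0 : E) = fun _ => 0 := by
    funext p
    simp [clarkeQuotient]
  rw [clarkeDeriv_eq_limsup, hq, limsup_const]

lemma limsup_clarkeQuotient_comp_le
    (hf : ∃ s ∈ 𝓝 x, ∃ K : NNReal, LipschitzOnWith K f s) (v : E) {ψ : E × ℝ → E × ℝ}
    (hψ : Tendsto ψ (clarkeFilter x) (clarkeFilter x)) :
    limsup (clarkeQuotient f v ∘ ψ) (clarkeFilter x) ≤ clarkeDeriv f x v :=
  have hb := isBoundedUnder_le_abs.mp (isBoundedUnder_abs_clarkeQuotient hf v)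
  hψ.limsup_comp_le_limsup (hψ.isBoundedUnder_comp hb.2).isCoboundedUnder_le hb.1

lemma clarkeDeriv_add_le (hf : ∃ s ∈ 𝓝 x, ∃ K : NNReal, LipschitzOnWith K f s) (v w : E) :
    clarkeDeriv f x (v + w) ≤ clarkeDeriv f x v + clarkeDeriv f x w := by
  have hψ := tendsto_translate_clarkeFilter x w
  calc clarkeDeriv f x (v + w)
      = limsup (fun p => clarkeQuotient f v (p.1 + p.2 • w, p.2) + clarkeQuotient f w p)
          (clarkeFilter x) :=
        congrArg (limsup · _) (funext (clarkeQuotient_add f v w))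
    _ ≤ limsup (clarkeQuotient f v ∘ fun p => (p.1 + p.2 • w, p.2)) (clarkeFilter x)
          + clarkeDeriv f x w :=
      limsup_add_le_of_isBoundedUnder_abs
        (hψ.isBoundedUnder_comp (isBoundedUnder_abs_clarkeQuotient hf v))
        (isBoundedUnder_abs_clarkeQuotient hf w)
    _ ≤ clarkeDeriv f x v + clarkeDeriv f x w := by
      gcongr; exact limsup_clarkeQuotient_comp_le hf v hψ

lemma clarkeDeriv_smul_le (hf : ∃ s ∈ 𝓝 x, ∃ K : NNReal, LipschitzOnWith K f s) (v : E)
    {c : ℝ} (hc : 0 < c) :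
    clarkeDeriv f x (c • v) ≤ c * clarkeDeriv f x v := by
  have hψ := tendsto_rescale_clarkeFilter x hc
  calc clarkeDeriv f x (c • v)
      = limsup (fun p => c * clarkeQuotient f v (p.1, c * p.2)) (clarkeFilter x) :=
        congrArg (limsup · _) (funext (clarkeQuotient_smul f v c))
    _ = c * limsup (clarkeQuotient f v ∘ fun p => (p.1, c * p.2)) (clarkeFilter x) :=
      limsup_const_mul_of_nonneg hc.le
        (hψ.isBoundedUnder_comp (isBoundedUnder_abs_clarkeQuotient hf v))
    _ ≤ c * clarkeDeriv f x v := by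
      gcongr; exact limsup_clarkeQuotient_comp_le hf v hψ

lemma clarkeDeriv_smul (hf : ∃ s ∈ 𝓝 x, ∃ K : NNReal, LipschitzOnWith K f s) (v : E)
    {c : ℝ} (hc : 0 < c) :
    clarkeDeriv f x (c • v) = c * clarkeDeriv f x v := by
  refine (clarkeDeriv_smul_le hf v hc).antisymm ?_
  have h := clarkeDeriv_smul_le hf (c • v) (inv_pos.mpr hc)
  rw [inv_smul_smul₀ hc.ne'] at h
  rwa [← le_div_iff₀' hc, div_eq_inv_mul]

lemma clarkeDeriv_mul_le (hf : ∃ s ∈ 𝓝 x, ∃ K : NNReal, LipschitzOnWith K f s)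
    (hg : ∃ s ∈ 𝓝 x, ∃ K : NNReal, LipschitzOnWith K g s) (hfx : 0 ≤ f x) (hgx : 0 ≤ g x)
    (v : E) :
    clarkeDeriv (fun y => f y * g y) x v
      ≤ g x * clarkeDeriv f x v + f x * clarkeDeriv g x v := by
  have hf_cont : ContinuousAt f x :=
    have ⟨_, hs, _, hK⟩ := hf; hK.continuousOn.continuousAt hs
  have hg_cont : ContinuousAt g x :=
    have ⟨_, hs, _, hK⟩ := hg; hK.continuousOn.continuousAt hs
  have hf_lim : Tendsto (fun p : E × ℝ => f (p.1 + p.2 • v)) (clarkeFilter x) (𝓝 (f x)) :=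
    hf_cont.tendsto.comp (tendsto_add_smul_clarkeFilter x v)
  have hg_lim : Tendsto (fun p : E × ℝ => g p.1) (clarkeFilter x) (𝓝 (g x)) :=
    hg_cont.tendsto.comp tendsto_fst
  have hqf := isBoundedUnder_abs_clarkeQuotient hf v
  have hqg := isBoundedUnder_abs_clarkeQuotient hg v
  calc clarkeDeriv (fun y => f y * g y) x v
      = limsup (fun p => f (p.1 + p.2 • v) * clarkeQuotient g v p
          + g p.1 * clarkeQuotient f v p) (clarkeFilter x) :=
        congrArg (limsup · _) (funext (clarkeQuotient_mul f g v))
    _ ≤ limsup (fun p => f (p.1 + p.2 • v) * clarkeQuotient g v p) (clarkeFilter x)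
          + limsup (fun p => g p.1 * clarkeQuotient f v p) (clarkeFilter x) :=
      limsup_add_le_of_isBoundedUnder_abs (isBoundedUnder_abs_mul_of_tendsto hf_lim hqg)
        (isBoundedUnder_abs_mul_of_tendsto hg_lim hqf)
    _ ≤ f x * clarkeDeriv g x v + g x * clarkeDeriv f x v :=
      add_le_add (limsup_mul_le_of_tendsto hfx hf_lim hqg)
        (limsup_mul_le_of_tendsto hgx hg_lim hqf)
    _ = g x * clarkeDeriv f x v + f x * clarkeDeriv g x v := add_comm _ _

end ClarkeDeriv

section Sublinear

variable {V : Type*} [AddCommGroup V] [Module ℝ V]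

lemma exists_linearMap_le_eq_of_sublinear (N : V → ℝ)
    (N_hom : ∀ c : ℝ, 0 < c → ∀ y, N (c • y) = c * N y) (N_add : ∀ y z, N (y + z) ≤ N y + N z)
    (v : V) : ∃ φ : V →ₗ[ℝ] ℝ, (∀ y, φ y ≤ N y) ∧ φ v = N v := by
  have N_zero : N 0 = 0 := by
    have h := N_hom 2 two_pos 0
    rw [smul_zero] at h
    linarith
  have hsmul_le : ∀ c : ℝ, c * N v ≤ N (c • v) := by
    intro c
    rcases lt_trichotomy c 0 with hc | rfl | hc
    · have h := N_add v (-v)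
      rw [add_neg_cancel, N_zero] at h
      rw [← neg_neg c, neg_smul, ← smul_neg, N_hom _ (neg_pos.mpr hc)]
      nlinarith
    · simp [N_zero]
    · rw [N_hom c hc]
  have hwell_defined : ∀ c : ℝ, c • v = 0 → c • N v = 0 := by
    intro c hc
    have h₁ := hsmul_le c
    have h₂ := hsmul_le (-c)
    rw [hc, N_zero] at h₁
    rw [neg_smul, hc, neg_zero, N_zero] at h₂
    rw [smul_eq_mul]
    linarith
  obtain ⟨φ, hφ_ext, hφ_le⟩ := exists_extension_of_le_sublinear
    (LinearPMap.mkSpanSingleton' (σ := RingHom.id ℝ) v (N v) hwell_defined) N N_hom N_add <| by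
      rintro ⟨_, hz⟩
      obtain ⟨c, rfl⟩ := Submodule.mem_span_singleton.mp hz
      rw [LinearPMap.mkSpanSingleton'_apply]
      exact hsmul_le c
  refine ⟨φ, hφ_le, ?_⟩
  have hv : v ∈ (LinearPMap.mkSpanSingleton' (σ := RingHom.id ℝ) v (N v) hwell_defined).domain
    := Submodule.mem_span_singleton_self v
  rw [show φ v = _ from hφ_ext ⟨v, hv⟩, LinearPMap.mkSpanSingleton'_apply_self]

end Sublinear

section ClarkeSubdiff

variable {E : Type*} [NormedAddCommGroup E] [InnerProductSpace ℝ E] {f : E → ℝ} {x : E}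

lemma exists_mem_clarkeSubdiff_inner_eq [CompleteSpace E]
    (hf : ∃ s ∈ 𝓝 x, ∃ K : NNReal, LipschitzOnWith K f s) (v : E) :
    ∃ ξ ∈ clarkeSubdiff f x, inner ℝ ξ v = clarkeDeriv f x v := by
  obtain ⟨φ, hφ_le, hφv⟩ := exists_linearMap_le_eq_of_sublinear (clarkeDeriv f x)
    (fun _ hc y => clarkeDeriv_smul hf y hc) (clarkeDeriv_add_le hf) v
  obtain ⟨K, hK⟩ := exists_clarkeDeriv_le_mul_norm hf
  have hφ_bound : ∀ y, ‖φ y‖ ≤ K * ‖y‖ := by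
    intro y
    have h := (hφ_le (-y)).trans (hK (-y))
    rw [map_neg, norm_neg] at h
    rw [Real.norm_eq_abs, abs_le]
    exact ⟨by linarith, (hφ_le y).trans (hK y)⟩
  let ξ := (InnerProductSpace.toDual ℝ E).symm (φ.mkContinuous K hφ_bound)
  have hξ : ∀ y, inner ℝ ξ y = φ y := fun _ => InnerProductSpace.toDual_symm_apply
  exact ⟨ξ, fun y => (hξ y).trans_le (hφ_le y), (hξ v).trans hφv⟩

lemma isClosed_clarkeSubdiff (f : E → ℝ) (x : E) : IsClosed (clarkeSubdiff f x) := by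
  simp only [clarkeSubdiff, ofPred_forall]
  exact isClosed_iInter fun v => isClosed_le (continuous_id.inner continuous_const) continuous_const

lemma convex_clarkeSubdiff (f : E → ℝ) (x : E) : Convex ℝ (clarkeSubdiff f x) := by
  simp only [clarkeSubdiff, ofPred_forall]
  exact convex_iInter fun v => convex_halfSpace_le
    ⟨fun a b => inner_add_left a b v, fun c a => real_inner_smul_left a v c⟩ _

lemma isBounded_clarkeSubdiff (hf : ∃ s ∈ 𝓝 x, ∃ K : NNReal, LipschitzOnWith K f s) :
    Bornology.IsBounded (clarkeSubdiff f x) := by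
  obtain ⟨K, hK⟩ := exists_clarkeDeriv_le_mul_norm hf
  refine (Metric.isBounded_closedBall (x := 0) (r := K)).subset fun ξ hξ => ?_
  have h := (hξ ξ).trans (hK ξ)
  rw [real_inner_self_eq_norm_sq] at h
  rw [mem_closedBall_zero_iff]
  nlinarith [norm_nonneg ξ, K.coe_nonneg]

lemma isCompact_clarkeSubdiff [ProperSpace E]
    (hf : ∃ s ∈ 𝓝 x, ∃ K : NNReal, LipschitzOnWith K f s) : IsCompact (clarkeSubdiff f x) :=
  Metric.isCompact_of_isClosed_isBounded (isClosed_clarkeSubdiff f x) (isBounded_clarkeSubdiff hf)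

lemma mem_of_forall_exists_inner_le [CompleteSpace E] {C : Set E} (hC_conv : Convex ℝ C)
    (hC_closed : IsClosed C) {ξ : E} (h : ∀ w, ∃ c ∈ C, inner ℝ ξ w ≤ inner ℝ c w) : ξ ∈ C := by
  by_contra hξ
  obtain ⟨φ, u, hφC, hφξ⟩ := geometric_hahn_banach_closed_point hC_conv hC_closed hξ
  obtain ⟨c, hc, hle⟩ := h ((InnerProductSpace.toDual ℝ E).symm φ)
  rw [real_inner_comm, InnerProductSpace.toDual_symm_apply, real_inner_comm,
    InnerProductSpace.toDual_symm_apply] at hle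
  linarith [hφC c hc]

end ClarkeSubdiff

theorem stmt18 {n : ℕ} (f g : EuclideanSpace ℝ (Fin n) → ℝ) (x : EuclideanSpace ℝ (Fin n))
    (hf : ∃ s ∈ nhds x, ∃ K : NNReal, LipschitzOnWith K f s)
    (hg : ∃ s ∈ nhds x, ∃ K : NNReal, LipschitzOnWith K g s)
    (hfx : 0 ≤ f x) (hgx : 0 ≤ g x) :
    clarkeSubdiff (fun y => f y * g y) x ⊆
      g x • clarkeSubdiff f x + f x • clarkeSubdiff g x := by
  intro ξ hξ
  have hC_compact : IsCompact (g x • clarkeSubdiff f x + f x • clarkeSubdiff g x) :=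
    ((isCompact_clarkeSubdiff hf).smul (g x)).add ((isCompact_clarkeSubdiff hg).smul (f x))
  have hC_convex : Convex ℝ (g x • clarkeSubdiff f x + f x • clarkeSubdiff g x) :=
    ((convex_clarkeSubdiff f x).smul (g x)).add ((convex_clarkeSubdiff g x).smul (f x))
  refine mem_of_forall_exists_inner_le hC_convex hC_compact.isClosed fun w => ?_
  obtain ⟨a, ha, haw⟩ := exists_mem_clarkeSubdiff_inner_eq hf w
  obtain ⟨b, hb, hbw⟩ := exists_mem_clarkeSubdiff_inner_eq hg w
  refine ⟨g x • a + f x • b, add_mem_add (smul_mem_smul_set ha) (smul_mem_smul_set hb), ?_⟩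
  calc inner ℝ ξ w ≤ clarkeDeriv (fun y => f y * g y) x w := hξ w
    _ ≤ g x * clarkeDeriv f x w + f x * clarkeDeriv g x w := clarkeDeriv_mul_le hf hg hfx hgx w
    _ = inner ℝ (g x • a + f x • b) w := by
      rw [inner_add_left, real_inner_smul_left, real_inner_smul_left, haw, hbw]
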